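/- arXiv:1103.6255 — 2 statements merged into one kernel-verified Lean document; each statement's English description precedes it below -/
import Mathlib

section
/- Let E and F be sets, f : E → F and g : F → E any functions. Then there exists a subset A of E such that E \ A = g '' (F \ f '' A). -/
theorem stmt_2 {E F : Type*} (f : E → F) (g : F → E) :
    ∃ A : Set E, Aᶜ = g '' (f '' A)ᶜ := by
  set h : Set E →o Set E :=
    ⟨fun X => (g '' (f '' X)ᶜ)ᶜ, by
      intro X Y hXY
      exact Set.compl_subset_compl.2 (Set.image_mono
        (Set.compl_subset_compl.2 (Set.image_mono hXY)))⟩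
  refine ⟨OrderHom.lfp h, ?_⟩
  have := OrderHom.map_lfp h
  have : (g '' (f '' OrderHom.lfp h)ᶜ)ᶜ = OrderHom.lfp h := this
  conv_lhs => rw [← this, compl_compl]
end

section
/- Let (E_i)_{i∈I} be a family of linearly ordered sets indexed by a well-ordered set I, each E_i having at least two elements. The lexicographic order on the product Π_{i∈I} E_i is a well-order if and only if each E_i is well-ordered and I is finite. -/
/-- In a linear order whose `<` is well-founded, if the type is infinite then there is a
strictly monotone sequence `ℕ → ι`. -/
lemma stmt_17_aux {ι : Type*} [LinearOrder ι] (h : WellFounded ((· < ·) : ι → ι → Prop))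
    [Infinite ι] : ∃ f : ℕ → ι, StrictMono f := by
  classical
  have hne : ∀ s : Finset ι, ((↑s : Set ι)ᶜ).Nonempty := fun s =>
    (s.finite_toSet.infinite_compl).nonempty
  set next : Finset ι → ι := fun s => h.min ((↑s : Set ι)ᶜ) (hne s) with hnext
  have hmem : ∀ s : Finset ι, next s ∉ s := fun s => by
    have := h.min_mem ((↑s : Set ι)ᶜ) (hne s)
    simpa using this
  set g : ℕ → Finset ι := fun n => Nat.rec ∅ (fun _ s => insert (next s) s) n with hg
  have hgsucc : ∀ n, g (n + 1) = insert (next (g n)) (g n) := fun n => rfl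
  refine ⟨fun n => next (g n), strictMono_nat_of_lt_succ fun n => ?_⟩
  have hsub : (↑(g (n + 1)) : Set ι)ᶜ ⊆ (↑(g n) : Set ι)ᶜ := by
    intro x hx
    rw [hgsucc] at hx
    simp only [Set.mem_compl_iff, Finset.coe_insert, Set.mem_insert_iff] at hx ⊢
    exact fun hx' => hx (Or.inr hx')
  have hle : ¬ next (g (n + 1)) < next (g n) :=
    h.not_lt_min ((↑(g n) : Set ι)ᶜ) (hsub (h.min_mem _ (hne _)))
  have hne' : next (g n) ≠ next (g (n + 1)) := by
    intro heq
    apply hmem (g (n + 1))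
    rw [← heq, hgsucc]
    exact Finset.mem_insert_self _ _
  exact lt_of_le_of_ne (not_lt.1 hle) hne'

theorem stmt_17 {ι : Type*} [LinearOrder ι] (hι : WellFoundedLT ι)
    (E : ι → Type*) [∀ i, LinearOrder (E i)] (h2 : ∀ i, ∃ a b : E i, a ≠ b) :
    WellFounded (Pi.Lex (· < ·) (fun {i} => ((· < ·) : E i → E i → Prop))) ↔
      (∀ i, WellFounded ((· < ·) : E i → E i → Prop)) ∧ Finite ι := by
  classical
  constructor
  · intro hwf
    -- choose two elements `p i < q i` in each factor
    have hpq : ∀ i, ∃ p q : E i, p < q := by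
      intro i
      obtain ⟨a, b, hab⟩ := h2 i
      rcases hab.lt_or_gt with h | h
      exacts [⟨a, b, h⟩, ⟨b, a, h⟩]
    choose p q hpq using hpq
    have noDesc : ∀ x : ℕ → ∀ i, E i,
        ¬ ∀ n, Pi.Lex (· < ·) (fun {i} => ((· < ·) : E i → E i → Prop)) (x (n + 1)) (x n) :=
      fun x hx => by
        have key : ∀ a, ∀ n, x n = a → False := by
          intro a
          induction a using WellFounded.induction hwf with
          | _ a IH =>
            intro n hn
            exact IH (x (n + 1)) (hn ▸ hx n) (n + 1) rfl
        exact key (x 0) 0 rfl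
    constructor
    · -- each factor is well-founded
      intro i
      rw [RelEmbedding.wellFounded_iff_isEmpty]
      by_contra hc
      rw [not_isEmpty_iff] at hc
      obtain ⟨f⟩ := hc
      set x : ℕ → ∀ j, E j := fun n => Function.update (fun j => p j) i (f n) with hx
      refine noDesc x fun n => ⟨i, fun j hj => ?_, ?_⟩
      · rw [hx]
        simp only [Function.update_of_ne hj.ne]
      · rw [hx]
        simp only [Function.update_self]
        exact f.map_rel_iff.2 (Nat.lt_succ_self n)
    · -- ι is finite
      by_contra hfin
      rw [not_finite_iff_infinite] at hfin
      obtain ⟨f, hf⟩ := stmt_17_aux hι.wf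
      set x : ℕ → ∀ j, E j := fun n j => if ∃ k, n ≤ k ∧ f k = j then q j else p j with hx
      refine noDesc x fun n => ⟨f n, fun j hj => ?_, ?_⟩
      · have h1 : ¬ ∃ k, n + 1 ≤ k ∧ f k = j := by
          rintro ⟨k, hk, rfl⟩
          exact absurd hj (not_lt.2 (hf.le_iff_le.2 (by omega)))
        have h2 : ¬ ∃ k, n ≤ k ∧ f k = j := by
          rintro ⟨k, hk, rfl⟩
          exact absurd hj (not_lt.2 (hf.le_iff_le.2 hk))
        rw [hx]
        simp only [if_neg h1, if_neg h2]
      · have h1 : ¬ ∃ k, n + 1 ≤ k ∧ f k = f n := by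
          rintro ⟨k, hk, hkn⟩
          have := hf.injective hkn
          omega
        have h2 : ∃ k, n ≤ k ∧ f k = f n := ⟨n, le_refl n, rfl⟩
        rw [hx]
        simp only [if_neg h1, if_pos h2]
        exact hpq (f n)
  · rintro ⟨hE, hfin⟩
    exact Pi.Lex.wellFounded (· < ·) hE
end
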